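/- Define f(u) = (1−e^{−u})/√(1+(1−e^{−u})²) and g(u) = 2·artanh(√2·f(u)) − √2·artanh(f(u)). Then there exists a constant C > 0 such that |g(u) − u − (2·ln 2 − √2·ln(1+√2))| ≤ C·e^{−u} for all u ≥ 1. In particular, g(u) − u converges to 2·ln 2 − √2·ln(1+√2) as u → ∞. -/

import Mathlib

open Real

/-- The inverse hyperbolic tangent, `artanh x = (1/2) log ((1+x)/(1−x))`. -/
noncomputable def artanh (x : ℝ) : ℝ := (1 / 2) * Real.log ((1 + x) / (1 - x))

/-- `f u = (1−e^{−u})/√(1+(1−e^{−u})²)`. -/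
noncomputable def f (u : ℝ) : ℝ :=
  (1 - Real.exp (-u)) / Real.sqrt (1 + (1 - Real.exp (-u)) ^ 2)

/-- `g u = 2 artanh(√2 f u) − √2 artanh(f u)`, the geometric complexity of the
two-level reset map with `u = wτ`. -/
noncomputable def g (u : ℝ) : ℝ :=
  2 * _root_.artanh (Real.sqrt 2 * f u) - Real.sqrt 2 * _root_.artanh (f u)

/-!
With `a = 1 - e^{-u}` and `s = √(1 + a²)`, the identity
`artanh (x / s) = log (s + x) - log (s² - x²) / 2` turns `g` into logarithms; since
`s² - a² = 1` and `s² - 2a² = e^{-u} (2 - e^{-u})`, the `log e^{-u}` term cancels `u`: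
`g u - u = 2 log (s + √2 a) - log (2 - e^{-u}) - √2 log (s + a)`.
Every argument here is at least `1` and lies within `O(e^{-u})` of its limit
(`|s - √2| ≤ e^{-u}`), and `log` is `1`-Lipschitz on `[1, ∞)`.
-/

lemma abs_log_sub_log_le_abs_sub {x y : ℝ} (hx : 1 ≤ x) (hy : 1 ≤ y) :
    |log x - log y| ≤ |x - y| := by
  have key : ∀ {a b : ℝ}, 1 ≤ a → 1 ≤ b → log a - log b ≤ |a - b| := fun {a b} ha hb => by
    have hb0 : 0 < b := by linarith
    calc log a - log b = log (a / b) := (log_div (by positivity) hb0.ne').symm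
      _ ≤ a / b - 1 := log_le_sub_one_of_pos (by positivity)
      _ = (a - b) / b := by field_simp
      _ ≤ |a - b| / b := by gcongr; exact le_abs_self _
      _ ≤ |a - b| := div_le_self (abs_nonneg _) hb
  rw [abs_le]
  constructor
  · linarith [key hy hx, abs_sub_comm x y]
  · exact key hx hy

lemma abs_sqrt_sub_sqrt_le {x y : ℝ} (hx : 1 ≤ x) (hy : 1 ≤ y) :
    |√x - √y| ≤ |x - y| / 2 := by
  have hsum : 2 ≤ √x + √y := by linarith [one_le_sqrt.2 hx, one_le_sqrt.2 hy]
  have hprod : x - y = (√x - √y) * (√x + √y) := by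
    linear_combination sq_sqrt (by linarith : 0 ≤ y) - sq_sqrt (by linarith : 0 ≤ x)
  rw [hprod, abs_mul, abs_of_pos (by linarith : 0 < √x + √y), le_div_iff₀ two_pos]
  exact mul_le_mul_of_nonneg_left hsum (abs_nonneg _)

lemma artanh_div_eq {x s : ℝ} (hxs : |x| < s) :
    _root_.artanh (x / s) = log (s + x) - log (s ^ 2 - x ^ 2) / 2 := by
  obtain ⟨hlow, hupp⟩ := abs_lt.1 hxs
  have hs : 0 < s := (abs_nonneg x).trans_lt hxs
  have hratio : (1 + x / s) / (1 - x / s) = (s + x) ^ 2 / (s ^ 2 - x ^ 2) := by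
    have : s - x ≠ 0 := by linarith
    have : s ^ 2 - x ^ 2 ≠ 0 := by nlinarith
    field_simp
    ring
  rw [_root_.artanh, hratio, log_div (pow_pos (by linarith) 2).ne' (by nlinarith), log_pow]
  push_cast
  ring

/-- `g u - u` as a function of `ε = e^{-u}`. -/
noncomputable def complexityExcess (ε : ℝ) : ℝ :=
  2 * log (√(1 + (1 - ε) ^ 2) + √2 * (1 - ε)) - log (2 - ε)
    - √2 * log (√(1 + (1 - ε) ^ 2) + (1 - ε))

lemma g_sub_self_eq {u : ℝ} (hu : 0 ≤ u) : g u - u = complexityExcess (exp (-u)) := by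
  set ε := exp (-u) with hε
  have hε0 : 0 < ε := exp_pos _
  have hε1 : ε ≤ 1 := exp_le_one_iff.2 (by linarith)
  set s := √(1 + (1 - ε) ^ 2)
  have hs2 : s ^ 2 = 1 + (1 - ε) ^ 2 := sq_sqrt (by positivity)
  have hs0 : 0 ≤ s := sqrt_nonneg _
  have hr2 : √2 ^ 2 = (2 : ℝ) := sq_sqrt (by norm_num)
  have hr0 : 0 ≤ √(2 : ℝ) := sqrt_nonneg _
  have h1 : |1 - ε| < s := by
    rw [abs_lt]; constructor <;> nlinarith
  have h2 : |√2 * (1 - ε)| < s := by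
    rw [abs_lt]; constructor <;> nlinarith [mul_pos hε0 hε0]
  have hlog1 : log (s ^ 2 - (1 - ε) ^ 2) = 0 := by rw [hs2]; simp
  have hlog2 : log (s ^ 2 - (√2 * (1 - ε)) ^ 2) = -u + log (2 - ε) := by
    rw [show s ^ 2 - (√2 * (1 - ε)) ^ 2 = ε * (2 - ε) by rw [hs2, mul_pow, hr2]; ring,
      log_mul hε0.ne' (by linarith), hε, log_exp]
  rw [g, f, ← hε, artanh_div_eq h1, mul_div_assoc', artanh_div_eq h2, hlog1, hlog2,
    complexityExcess]
  ring

lemma complexityExcess_zero :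
    complexityExcess 0 = 2 * log 2 - √2 * log (1 + √2) := by
  have hlog : 2 * log (√2 + √2) = 3 * log 2 := by
    rw [← two_mul, log_mul two_ne_zero (by positivity), log_sqrt (by norm_num)]
    ring
  norm_num [complexityExcess]
  rw [hlog, add_comm (√2) 1]
  ring

lemma abs_complexityExcess_sub_zero_le {ε : ℝ} (hε0 : 0 ≤ ε) (hε1 : ε ≤ 1) :
    |complexityExcess ε - complexityExcess 0| ≤ 11 * ε := by
  set s := √(1 + (1 - ε) ^ 2)
  set r := √(2 : ℝ)
  have hr1 : 1 ≤ r := one_le_sqrt.2 (by norm_num)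
  have hr2 : r ≤ 2 := sqrt_le_iff.2 ⟨by norm_num, by norm_num⟩
  have hs1 : 1 ≤ s := one_le_sqrt.2 (by nlinarith)
  have hsr : |s - r| ≤ ε := by
    refine (abs_sqrt_sub_sqrt_le (by nlinarith) one_le_two).trans ?_
    rw [div_le_iff₀ two_pos, abs_le]
    constructor <;> nlinarith
  have hA : |log (s + r * (1 - ε)) - log (r + r)| ≤ 3 * ε := by
    refine (abs_log_sub_log_le_abs_sub (by nlinarith) (by linarith)).trans ?_
    rw [show s + r * (1 - ε) - (r + r) = (s - r) - r * ε by ring]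
    refine (abs_sub _ _).trans ?_
    rw [abs_of_nonneg (mul_nonneg (by linarith) hε0)]
    nlinarith
  have hB : |log (2 - ε) - log 2| ≤ ε := by
    refine (abs_log_sub_log_le_abs_sub (by linarith) one_le_two).trans ?_
    rw [show 2 - ε - 2 = -ε by ring, abs_neg, abs_of_nonneg hε0]
  have hC : |log (s + (1 - ε)) - log (r + 1)| ≤ 2 * ε := by
    refine (abs_log_sub_log_le_abs_sub (by linarith) (by linarith)).trans ?_
    rw [show s + (1 - ε) - (r + 1) = (s - r) - ε by ring]
    refine (abs_sub _ _).trans ?_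
    rw [abs_of_nonneg hε0]
    linarith
  have hE0 : complexityExcess 0 = 2 * log (r + r) - log 2 - r * log (r + 1) := by
    norm_num [complexityExcess, r]
  rw [hE0, show complexityExcess ε - (2 * log (r + r) - log 2 - r * log (r + 1))
      = 2 * (log (s + r * (1 - ε)) - log (r + r)) - (log (2 - ε) - log 2)
        - r * (log (s + (1 - ε)) - log (r + 1)) by rw [complexityExcess]; ring]
  calc _ ≤ 2 * |log (s + r * (1 - ε)) - log (r + r)| + |log (2 - ε) - log 2|
          + r * |log (s + (1 - ε)) - log (r + 1)| := by
        refine (abs_sub _ _).trans (add_le_add ((abs_sub _ _).trans ?_) ?_) <;>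
          rw [abs_mul, abs_of_pos (by positivity)]
    _ ≤ 2 * (3 * ε) + ε + 2 * (2 * ε) := by gcongr
    _ = 11 * ε := by ring

lemma abs_g_sub_self_sub_le {u : ℝ} (hu : 0 ≤ u) :
    |g u - u - (2 * log 2 - √2 * log (1 + √2))| ≤ 11 * exp (-u) := by
  rw [g_sub_self_eq hu, ← complexityExcess_zero]
  exact abs_complexityExcess_sub_zero_le (exp_pos _).le (exp_le_one_iff.2 (by linarith))

/-- **Asymptotics of the two-level complexity:**
`g u = u + 2 ln 2 − √2 ln(1+√2) + O(e^{−u})`, and in particular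
`g u − u → 2 ln 2 − √2 ln(1+√2)` as `u → ∞`. -/
theorem two_level_complexity_asymptotics :
    (∃ C : ℝ, 0 < C ∧ ∀ u : ℝ, 1 ≤ u →
      |g u - u - (2 * Real.log 2 - Real.sqrt 2 * Real.log (1 + Real.sqrt 2))| ≤
        C * Real.exp (-u)) ∧
    Filter.Tendsto (fun u => g u - u) Filter.atTop
      (nhds (2 * Real.log 2 - Real.sqrt 2 * Real.log (1 + Real.sqrt 2))) := by
  refine ⟨⟨11, by norm_num, fun u hu => abs_g_sub_self_sub_le (by linarith)⟩, ?_⟩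
  rw [← tendsto_sub_nhds_zero_iff]
  refine squeeze_zero_norm' ?_ (by simpa using tendsto_exp_neg_atTop_nhds_zero.const_mul 11)
  filter_upwards [Filter.eventually_ge_atTop 0] with u hu
  exact abs_g_sub_self_sub_le hu
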